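/- Fix integers d ≥ 1 and ℓ ≥ 1, let U₁, …, U_M be the points of the ℓ-th principal lattice P_ℓ of the simplex Δ_d with M = binom(ℓ+d, d), and let σ₀ be the minimum singular value of the Vandermonde-type matrix 𝒱. Then σ₀ ≥ binom(ℓ+d, ℓ)^{−3} · 4^{−ℓ} · ℓ^{−2ℓ}. -/

import Mathlib

open MeasureTheory Finset
open scoped ENNReal

noncomputable section

/-- The largest integer strictly less than `β` (for `β > 0`). -/
def lflr (β : ℝ) : ℕ := ⌈β⌉₊ - 1

/-- The Euclidean (`ℓ²`) norm on `Fin d → ℝ`. -/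
noncomputable def l2norm {d : ℕ} (x : Fin d → ℝ) : ℝ := Real.sqrt (∑ i, x i ^ 2)

/-- Partial derivative in coordinate `i`. -/
noncomputable def pder {d : ℕ} (i : Fin d) (f : (Fin d → ℝ) → ℝ) : (Fin d → ℝ) → ℝ :=
  fun x => fderiv ℝ f x (Pi.single i 1)

/-- The multi-index partial differential operator `D^s`. -/
noncomputable def mderiv {d : ℕ} (s : Fin d → ℕ) (f : (Fin d → ℝ) → ℝ) : (Fin d → ℝ) → ℝ :=
  (List.finRange d).foldr (fun i g => (pder i)^[s i] g) f

/-- The Hölder class `H(β, L)`: functions supported on the unit cube, `⌊β⌋` times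
differentiable, whose top-order partial derivatives are `(β - ⌊β⌋)`-Hölder with
constant `L` (w.r.t. the Euclidean norm). -/
def HolderClass (d : ℕ) (β L : ℝ) (f : (Fin d → ℝ) → ℝ) : Prop :=
  (∀ x, x ∉ Set.Icc (0 : Fin d → ℝ) 1 → f x = 0) ∧
  ContDiff ℝ (lflr β : ℕ) f ∧
  ∀ s : Fin d → ℕ, (∑ i, s i) = lflr β → ∀ x y : Fin d → ℝ,
    |mderiv s f x - mderiv s f y| ≤ L * l2norm (x - y) ^ (β - (lflr β : ℝ))

/-- Barycentric coordinates with respect to the simplex `Δ_d` with vertices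
`0, e_1, …, e_d`. -/
def lam {d : ℕ} (t : Fin (d + 1)) (x : Fin d → ℝ) : ℝ :=
  if h : t = 0 then 1 - ∑ i, x i else x (t.pred h)

/-- The `ℓ`-th principal lattice of the simplex `Δ_d`: points of the simplex all of
whose barycentric coordinates are nonnegative integer multiples of `1/ℓ`. -/
def principalLattice (d ℓ : ℕ) : Set (Fin d → ℝ) :=
  {x | ∀ t : Fin (d + 1), 0 ≤ lam t x ∧ ∃ r : ℕ, (ℓ : ℝ) * lam t x = r}

/-- The Lagrange basis polynomial `p` associated with a point `u` of the `ℓ`-th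
principal lattice:  `p(x) = ∏_{t : λ_t(u) > 0} ∏_{r=0}^{ℓλ_t(u)-1}
(λ_t(x) - r/ℓ)/(λ_t(u) - r/ℓ)`. -/
noncomputable def lagBasis (d ℓ : ℕ) (u x : Fin d → ℝ) : ℝ :=
  ∏ t : Fin (d + 1), ∏ r ∈ Finset.range ⌊(ℓ : ℝ) * lam t u⌋₊,
    (lam t x - r / ℓ) / (lam t u - r / ℓ)

end

/-! The inverse of `𝒱` is explicit: its `k`-th column lists the monomial coefficients of the
Lagrange polynomial of `U_k`, a product of `ℓ` affine factors
`(λ_t - r/ℓ) / (λ_t(U_k) - r/ℓ)`. The `ℓ¹` norm of coefficients is submultiplicative and each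
factor has `ℓ¹` norm at most `ℓ (d + 2)`, so every entry of `𝒱⁻¹` is at most `(ℓ (d + 2))^ℓ`
in absolute value. Hence `‖𝒱⁻¹‖₂ ≤ M (ℓ (d + 2))^ℓ`, i.e. `σ₀ ≥ (M (ℓ (d + 2))^ℓ)⁻¹`, and the
stated constant follows from `(d + 1)^ℓ ≤ binom(ℓ + d, ℓ) ℓ^ℓ`. -/

open MvPolynomial Finset
open scoped Matrix

noncomputable section

namespace MvPolynomial

variable {σ R : Type*} [NormedCommRing R]

def l1Norm (p : MvPolynomial σ R) : ℝ := ∑ s ∈ p.support, ‖coeff s p‖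

lemma l1Norm_nonneg (p : MvPolynomial σ R) : 0 ≤ l1Norm p :=
  sum_nonneg fun _ _ => norm_nonneg _

lemma l1Norm_eq_sum_of_support_subset (p : MvPolynomial σ R) {T : Finset (σ →₀ ℕ)}
    (hT : p.support ⊆ T) : l1Norm p = ∑ s ∈ T, ‖coeff s p‖ :=
  sum_subset hT fun s _ hs => by rw [notMem_support_iff.mp hs, norm_zero]

lemma norm_coeff_le_l1Norm (p : MvPolynomial σ R) (s : σ →₀ ℕ) : ‖coeff s p‖ ≤ l1Norm p := by
  by_cases hs : s ∈ p.support
  · exact single_le_sum (f := fun s => ‖coeff s p‖) (fun _ _ => norm_nonneg _) hs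
  · rw [notMem_support_iff.mp hs, norm_zero]
    exact l1Norm_nonneg p

@[simp]
lemma l1Norm_zero : l1Norm (0 : MvPolynomial σ R) = 0 := by
  simp [l1Norm]

@[simp]
lemma l1Norm_monomial (s : σ →₀ ℕ) (a : R) : l1Norm (monomial s a) = ‖a‖ := by
  classical
  by_cases ha : a = 0
  · simp [ha]
  · simp [l1Norm, support_monomial, ha]

@[simp]
lemma l1Norm_C (a : R) : l1Norm (C a : MvPolynomial σ R) = ‖a‖ :=
  l1Norm_monomial 0 a

@[simp]
lemma l1Norm_one [NormOneClass R] : l1Norm (1 : MvPolynomial σ R) = 1 := by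
  rw [← C_1, l1Norm_C, norm_one]

@[simp]
lemma l1Norm_X [NormOneClass R] (i : σ) : l1Norm (X i : MvPolynomial σ R) = 1 := by
  rw [X, l1Norm_monomial, norm_one]

@[simp]
lemma l1Norm_neg (p : MvPolynomial σ R) : l1Norm (-p) = l1Norm p := by
  simp [l1Norm, support_neg]

lemma l1Norm_add_le (p q : MvPolynomial σ R) : l1Norm (p + q) ≤ l1Norm p + l1Norm q := by
  classical
  rw [l1Norm_eq_sum_of_support_subset (p + q) support_add,
    l1Norm_eq_sum_of_support_subset p subset_union_left,
    l1Norm_eq_sum_of_support_subset q subset_union_right, ← sum_add_distrib]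
  exact sum_le_sum fun s _ => by rw [coeff_add]; exact norm_add_le _ _

lemma l1Norm_sub_le (p q : MvPolynomial σ R) : l1Norm (p - q) ≤ l1Norm p + l1Norm q := by
  simpa [sub_eq_add_neg] using l1Norm_add_le p (-q)

lemma l1Norm_sum_le {ι : Type*} (s : Finset ι) (f : ι → MvPolynomial σ R) :
    l1Norm (∑ i ∈ s, f i) ≤ ∑ i ∈ s, l1Norm (f i) :=
  le_sum_of_subadditive l1Norm l1Norm_zero.le l1Norm_add_le s f

lemma l1Norm_mul_le (p q : MvPolynomial σ R) : l1Norm (p * q) ≤ l1Norm p * l1Norm q := by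
  conv_lhs => rw [p.as_sum, q.as_sum, sum_mul_sum]
  calc _ ≤ ∑ a ∈ p.support, ∑ b ∈ q.support,
          l1Norm (monomial a (coeff a p) * monomial b (coeff b q)) :=
        (l1Norm_sum_le _ _).trans (sum_le_sum fun a _ => l1Norm_sum_le _ _)
    _ ≤ ∑ a ∈ p.support, ∑ b ∈ q.support, ‖coeff a p‖ * ‖coeff b q‖ := by
        gcongr with a _ b _
        rw [monomial_mul, l1Norm_monomial]
        exact norm_mul_le _ _
    _ = l1Norm p * l1Norm q := by rw [l1Norm, l1Norm, sum_mul_sum]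

lemma l1Norm_prod_le [NormOneClass R] {ι : Type*} (s : Finset ι) (f : ι → MvPolynomial σ R) :
    l1Norm (∏ i ∈ s, f i) ≤ ∏ i ∈ s, l1Norm (f i) := by
  classical
  induction s using Finset.induction with
  | empty => simp
  | insert a s ha ih =>
    rw [prod_insert ha, prod_insert ha]
    exact (l1Norm_mul_le _ _).trans (mul_le_mul_of_nonneg_left ih (l1Norm_nonneg _))

end MvPolynomial

section Barycentric

variable {d : ℕ}

lemma lam_zero (x : Fin d → ℝ) : lam 0 x = 1 - ∑ i, x i := dif_pos rfl

lemma lam_succ (i : Fin d) (x : Fin d → ℝ) : lam i.succ x = x i := by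
  simp [lam, Fin.succ_ne_zero]

lemma sum_lam (x : Fin d → ℝ) : ∑ t, lam t x = 1 := by
  simp only [Fin.sum_univ_succ, lam_zero, lam_succ]
  ring

variable (d) in
def baryPoly (t : Fin (d + 1)) : MvPolynomial (Fin d) ℝ :=
  if h : t = 0 then 1 - ∑ i, X i else X (t.pred h)

lemma eval_baryPoly (t : Fin (d + 1)) (x : Fin d → ℝ) : eval x (baryPoly d t) = lam t x := by
  unfold baryPoly lam
  split_ifs <;> simp

lemma totalDegree_baryPoly_le (t : Fin (d + 1)) : (baryPoly d t).totalDegree ≤ 1 := by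
  unfold baryPoly
  split_ifs
  · refine (totalDegree_sub _ _).trans (max_le (by simp) ?_)
    exact (totalDegree_finsetSum _ _).trans (Finset.sup_le fun i _ => (totalDegree_X i).le)
  · exact (totalDegree_X _).le

lemma l1Norm_baryPoly_le (t : Fin (d + 1)) : l1Norm (baryPoly d t) ≤ d + 1 := by
  unfold baryPoly
  split_ifs
  · calc l1Norm (1 - ∑ i, X i : MvPolynomial (Fin d) ℝ)
          ≤ l1Norm (1 : MvPolynomial (Fin d) ℝ) + ∑ i, l1Norm (X i : MvPolynomial (Fin d) ℝ) :=
            (l1Norm_sub_le _ _).trans (by gcongr; exact l1Norm_sum_le _ _)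
      _ = d + 1 := by simp [add_comm]
  · simp

end Barycentric

def latticeIndex {d : ℕ} (ℓ : ℕ) (u : Fin d → ℝ) (t : Fin (d + 1)) : ℕ :=
  ⌊(ℓ : ℝ) * lam t u⌋₊

section Lattice

variable {d ℓ : ℕ} {u v : Fin d → ℝ}

lemma natCast_latticeIndex (hu : u ∈ principalLattice d ℓ) (t : Fin (d + 1)) :
    (latticeIndex ℓ u t : ℝ) = ℓ * lam t u := by
  obtain ⟨-, r, hr⟩ := hu t
  rw [latticeIndex, hr, Nat.floor_natCast]

lemma sum_latticeIndex (hu : u ∈ principalLattice d ℓ) : ∑ t, latticeIndex ℓ u t = ℓ := by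
  have : ((∑ t, latticeIndex ℓ u t : ℕ) : ℝ) = ℓ := by
    push_cast [natCast_latticeIndex hu]
    rw [← mul_sum, sum_lam, mul_one]
  exact_mod_cast this

lemma latticeIndex_le (hu : u ∈ principalLattice d ℓ) (t : Fin (d + 1)) :
    latticeIndex ℓ u t ≤ ℓ :=
  (single_le_sum (f := latticeIndex ℓ u) (fun _ _ => Nat.zero_le _) (mem_univ t)).trans_eq
    (sum_latticeIndex hu)

lemma latticeIndex_injOn (hℓ : ℓ ≠ 0) :
    Set.InjOn (latticeIndex (d := d) ℓ) (principalLattice d ℓ) := by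
  intro u hu v hv huv
  funext i
  have h := congrArg (fun m => (m i.succ : ℝ)) huv
  simp only [natCast_latticeIndex hu, natCast_latticeIndex hv, lam_succ] at h
  exact mul_left_cancel₀ (Nat.cast_ne_zero.mpr hℓ) h

lemma exists_latticeIndex_lt (hℓ : ℓ ≠ 0) (hu : u ∈ principalLattice d ℓ)
    (hv : v ∈ principalLattice d ℓ) (huv : u ≠ v) :
    ∃ t, latticeIndex ℓ v t < latticeIndex ℓ u t := by
  by_contra! h
  refine huv (latticeIndex_injOn hℓ hu hv (funext fun t => ?_))
  refine (sum_eq_sum_iff_of_le fun t _ => h t).mp ?_ t (mem_univ t)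
  rw [sum_latticeIndex hu, sum_latticeIndex hv]

end Lattice

section Lagrange

variable {d ℓ : ℕ} {u v : Fin d → ℝ}

variable (d ℓ) in
def lagPoly (u : Fin d → ℝ) : MvPolynomial (Fin d) ℝ :=
  ∏ t, ∏ r ∈ range (latticeIndex ℓ u t),
    C (lam t u - r / ℓ)⁻¹ * (baryPoly d t - C ((r : ℝ) / ℓ))

lemma eval_lagPoly (x : Fin d → ℝ) : eval x (lagPoly d ℓ u) = lagBasis d ℓ u x := by
  simp only [lagPoly, lagBasis, latticeIndex, map_prod, eval_mul, eval_C, eval_sub,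
    eval_baryPoly, inv_mul_eq_div]

lemma lagBasis_self (d ℓ : ℕ) (u : Fin d → ℝ) : lagBasis d ℓ u u = 1 := by
  refine prod_eq_one fun t _ => prod_eq_one fun r hr => div_self ?_
  have hr : (r : ℝ) < ℓ * lam t u := Nat.lt_of_lt_floor (mem_range.mp hr)
  have hℓ : (ℓ : ℝ) ≠ 0 := by
    intro h
    rw [h, zero_mul] at hr
    exact hr.not_ge r.cast_nonneg
  rw [sub_ne_zero]
  rintro h
  rw [h, mul_div_cancel₀ _ hℓ] at hr
  exact hr.false

lemma lagBasis_eq_zero (hℓ : ℓ ≠ 0) (hu : u ∈ principalLattice d ℓ)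
    (hv : v ∈ principalLattice d ℓ) (huv : u ≠ v) : lagBasis d ℓ u v = 0 := by
  obtain ⟨t, ht⟩ := exists_latticeIndex_lt hℓ hu hv huv
  refine prod_eq_zero (mem_univ t) (prod_eq_zero (mem_range.mpr ht) ?_)
  rw [natCast_latticeIndex hv, mul_div_cancel_left₀ _ (Nat.cast_ne_zero.mpr hℓ), sub_self,
    zero_div]

lemma totalDegree_lagPoly_le (u : Fin d → ℝ) :
    (lagPoly d ℓ u).totalDegree ≤ ∑ t, latticeIndex ℓ u t := by
  refine (totalDegree_finsetProd _ _).trans (sum_le_sum fun t _ => ?_)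
  refine (totalDegree_finsetProd _ _).trans ?_
  calc _ ≤ ∑ _r ∈ range (latticeIndex ℓ u t), 1 := sum_le_sum fun r _ => ?_
    _ = latticeIndex ℓ u t := by simp
  refine (totalDegree_mul _ _).trans ?_
  rw [totalDegree_C, zero_add]
  exact (totalDegree_sub _ _).trans (max_le (totalDegree_baryPoly_le t) (by simp))

lemma sum_le_of_mem_support_lagPoly (hu : u ∈ principalLattice d ℓ) {s : Fin d →₀ ℕ}
    (hs : s ∈ (lagPoly d ℓ u).support) : ∑ i, s i ≤ ℓ := by
  have h := (le_totalDegree hs).trans (totalDegree_lagPoly_le u)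
  rwa [Finsupp.sum_fintype _ _ fun _ => rfl, sum_latticeIndex hu] at h

lemma l1Norm_lagPoly_le (hu : u ∈ principalLattice d ℓ) :
    l1Norm (lagPoly d ℓ u) ≤ (ℓ * (d + 2)) ^ ℓ := by
  have hfactor : ∀ t, ∀ r ∈ range (latticeIndex ℓ u t),
      l1Norm (C (lam t u - r / ℓ)⁻¹ * (baryPoly d t - C ((r : ℝ) / ℓ))) ≤ ℓ * (d + 2) := by
    intro t r hr
    have hrm : (r : ℝ) + 1 ≤ latticeIndex ℓ u t := by exact_mod_cast mem_range.mp hr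
    have hrℓ : (r : ℝ) + 1 ≤ ℓ := by
      exact_mod_cast (mem_range.mp hr).trans_le (latticeIndex_le hu t)
    have hℓ : (0 : ℝ) < ℓ := by linarith [r.cast_nonneg (α := ℝ)]
    have hgap : lam t u - r / ℓ = (latticeIndex ℓ u t - r) / ℓ := by
      rw [sub_div, natCast_latticeIndex hu, mul_div_cancel_left₀ _ hℓ.ne']
    have hinv : ‖(lam t u - r / ℓ)⁻¹‖ ≤ ℓ := by
      rw [hgap, inv_div, Real.norm_of_nonneg (div_nonneg hℓ.le (by linarith))]
      exact div_le_self hℓ.le (by linarith)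
    have hshift : ‖(r : ℝ) / ℓ‖ ≤ 1 := by
      rw [Real.norm_of_nonneg (by positivity)]
      exact div_le_one_of_le₀ (by linarith) hℓ.le
    calc _ ≤ ‖(lam t u - r / ℓ)⁻¹‖ * (l1Norm (baryPoly d t) + ‖(r : ℝ) / ℓ‖) := by
          refine (l1Norm_mul_le _ _).trans ?_
          rw [l1Norm_C]
          gcongr
          simpa using l1Norm_sub_le (baryPoly d t) (C ((r : ℝ) / ℓ))
      _ ≤ ℓ * (d + 1 + 1) :=
          mul_le_mul hinv (add_le_add (l1Norm_baryPoly_le t) hshift)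
            (add_nonneg (l1Norm_nonneg _) (norm_nonneg _)) hℓ.le
      _ = ℓ * (d + 2) := by ring
  calc l1Norm (lagPoly d ℓ u)
      ≤ ∏ t, ∏ r ∈ range (latticeIndex ℓ u t),
          l1Norm (C (lam t u - r / ℓ)⁻¹ * (baryPoly d t - C ((r : ℝ) / ℓ))) :=
        (l1Norm_prod_le _ _).trans
          (prod_le_prod (fun _ _ => l1Norm_nonneg _) fun _ _ => l1Norm_prod_le _ _)
    _ ≤ ∏ t, ∏ _r ∈ range (latticeIndex ℓ u t), (ℓ * (d + 2) : ℝ) :=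
        prod_le_prod (fun _ _ => prod_nonneg fun _ _ => l1Norm_nonneg _)
          fun t _ => prod_le_prod (fun _ _ => l1Norm_nonneg _) (hfactor t)
    _ = (ℓ * (d + 2)) ^ ℓ := by
        simp only [prod_const, card_range, prod_pow_eq_pow_sum, sum_latticeIndex hu]

end Lagrange

lemma eval_eq_sum_coeff_mul_prod_pow {ι σ R : Type*} [Fintype ι] [Fintype σ] [CommSemiring R]
    {e : ι → σ →₀ ℕ} (he : Function.Injective e) {p : MvPolynomial σ R}
    (hp : ↑p.support ⊆ Set.range e) (x : σ → R) :
    eval x p = ∑ j, coeff (e j) p * ∏ i, x i ^ e j i := by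
  classical
  have hsub : p.support ⊆ univ.image e := fun s hs => by
    obtain ⟨j, rfl⟩ := hp hs
    exact mem_image_of_mem e (mem_univ j)
  rw [eval_eq', sum_subset hsub fun s _ hs => by rw [notMem_support_iff.mp hs, zero_mul],
    sum_image fun a _ b _ h => he h]

lemma vandermonde_mul_coeff_eq_one {ι σ R : Type*} [Fintype ι] [DecidableEq ι] [Fintype σ]
    [CommSemiring R] {x : ι → σ → R} {P : ι → MvPolynomial σ R} {e : ι → σ →₀ ℕ}
    (he : Function.Injective e) (hsupp : ∀ k, ↑(P k).support ⊆ Set.range e)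
    (hdiag : ∀ k, eval (x k) (P k) = 1) (hoff : ∀ k k', k ≠ k' → eval (x k) (P k') = 0) :
    Matrix.of (fun k j => ∏ i, x k i ^ e j i) * Matrix.of (fun j k => coeff (e j) (P k)) = 1 := by
  ext k k'
  simp only [Matrix.mul_apply, Matrix.of_apply, Matrix.one_apply, mul_comm (∏ i, _),
    ← eval_eq_sum_coeff_mul_prod_pow he (hsupp k')]
  split_ifs with h
  · exact h ▸ hdiag k
  · exact hoff k k' h

lemma l2norm_mulVec_le {n : ℕ} (A : Matrix (Fin n) (Fin n) ℝ) {B : ℝ} (hB : 0 ≤ B)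
    (hA : ∀ i j, |A i j| ≤ B) (w : Fin n → ℝ) :
    l2norm (A *ᵥ w) ≤ n * B * l2norm w := by
  have hrow : ∀ i, (A *ᵥ w) i ^ 2 ≤ n * B ^ 2 * ∑ j, w j ^ 2 := fun i =>
    calc (A *ᵥ w) i ^ 2 ≤ (∑ j, A i j ^ 2) * ∑ j, w j ^ 2 := sum_mul_sq_le_sq_mul_sq univ (A i) w
      _ ≤ (∑ _j : Fin n, B ^ 2) * ∑ j, w j ^ 2 := by
          refine mul_le_mul_of_nonneg_right (sum_le_sum fun j _ => ?_) (by positivity)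
          exact sq_le_sq' (abs_le.mp (hA i j)).1 (abs_le.mp (hA i j)).2
      _ = n * B ^ 2 * ∑ j, w j ^ 2 := by simp
  calc l2norm (A *ᵥ w) ≤ √((n * B) ^ 2 * ∑ j, w j ^ 2) := by
        refine Real.sqrt_le_sqrt ((sum_le_sum fun i _ => hrow i).trans_eq ?_)
        simp only [sum_const, card_univ, Fintype.card_fin, nsmul_eq_mul]
        ring
    _ = n * B * l2norm w := by
        rw [Real.sqrt_mul (sq_nonneg _), Real.sqrt_sq (by positivity), l2norm]

lemma choose_mul_pow_le (d ℓ : ℕ) :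
    ((ℓ + d).choose d : ℝ) * (ℓ * (d + 2)) ^ ℓ ≤
      ((ℓ + d).choose ℓ : ℝ) ^ 3 * 4 ^ ℓ * ℓ ^ (2 * ℓ) := by
  rw [← Nat.choose_symm_add]
  set c : ℝ := ↑((ℓ + d).choose ℓ)
  have hc : 1 ≤ c := Nat.one_le_cast.mpr (Nat.choose_pos (Nat.le_add_right ℓ d))
  have hpow : ((d : ℝ) + 1) ^ ℓ ≤ c * ℓ ^ ℓ := by
    have h := Nat.pow_le_choose (α := ℝ) ℓ (ℓ + d)
    rw [show ℓ + d + 1 - ℓ = d + 1 by omega, div_le_iff₀ (by positivity)] at h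
    push_cast at h
    calc _ ≤ c * ℓ.factorial := h
      _ ≤ c * ℓ ^ ℓ := by gcongr; exact_mod_cast Nat.factorial_le_pow ℓ
  calc c * (ℓ * (d + 2)) ^ ℓ ≤ c * (ℓ * (2 * (d + 1))) ^ ℓ := by gcongr; linarith
    _ = c * (ℓ ^ ℓ * 2 ^ ℓ * (d + 1) ^ ℓ) := by rw [mul_pow, mul_pow, mul_assoc]
    _ ≤ c * (ℓ ^ ℓ * 2 ^ ℓ * (c * ℓ ^ ℓ)) := by gcongr
    _ = c ^ 2 * 2 ^ ℓ * ℓ ^ (2 * ℓ) := by ring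
    _ ≤ c ^ 3 * 4 ^ ℓ * ℓ ^ (2 * ℓ) := by
        gcongr <;> norm_num [hc]

end

theorem stmt8_general (d ℓ : ℕ) (hℓ : 1 ≤ ℓ)
    (M : ℕ) (hM : M = Nat.choose (ℓ + d) d)
    (U : Fin M → (Fin d → ℝ)) (hUinj : Function.Injective U)
    (hUrange : Set.range U = principalLattice d ℓ)
    (α : Fin M → (Fin d → ℕ)) (hαinj : Function.Injective α)
    (hαrange : Set.range α = {s : Fin d → ℕ | ∑ i, s i ≤ ℓ})
    (V : Matrix (Fin M) (Fin M) ℝ)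
    (hV : V = Matrix.of fun k j : Fin M => ∏ i, U k i ^ α j i)
    (σ₀ : ℝ)
    (hσ : IsLeast {r : ℝ | ∃ u : Fin M → ℝ, l2norm u = 1 ∧ r = l2norm (V.mulVec u)} σ₀) :
    ((Nat.choose (ℓ + d) ℓ : ℝ) ^ 3)⁻¹ * ((4 : ℝ) ^ ℓ)⁻¹ * ((ℓ : ℝ) ^ (2 * ℓ))⁻¹ ≤ σ₀ := by
  obtain ⟨⟨u, hu, rfl⟩, -⟩ := hσ
  have hU : ∀ k, U k ∈ principalLattice d ℓ := fun k => hUrange ▸ Set.mem_range_self k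
  let e : Fin M → Fin d →₀ ℕ := fun j => Finsupp.equivFunOnFinite.symm (α j)
  let C : Matrix (Fin M) (Fin M) ℝ := Matrix.of fun j k => coeff (e j) (lagPoly d ℓ (U k))
  have hsupp : ∀ k, ↑(lagPoly d ℓ (U k)).support ⊆ Set.range e := fun k s hs => by
    obtain ⟨j, hj⟩ : ⇑s ∈ Set.range α := hαrange ▸ sum_le_of_mem_support_lagPoly (hU k) hs
    exact ⟨j, by simp [e, hj]⟩
  have hCV : C * V = 1 := mul_eq_one_comm.mp <| hV ▸ vandermonde_mul_coeff_eq_one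
    (fun _ _ h => hαinj (Finsupp.equivFunOnFinite.symm.injective h)) hsupp
    (fun k => by rw [eval_lagPoly, lagBasis_self])
    fun k k' h => by
      rw [eval_lagPoly, lagBasis_eq_zero (by omega) (hU k') (hU k) (hUinj.ne h.symm)]
  have hC : ∀ j k, |C j k| ≤ (ℓ * (d + 2) : ℝ) ^ ℓ := fun j k =>
    (norm_coeff_le_l1Norm _ _).trans (l1Norm_lagPoly_le (hU k))
  have hbound : (M : ℝ) * (ℓ * (d + 2)) ^ ℓ ≤ (ℓ + d).choose ℓ ^ 3 * 4 ^ ℓ * ℓ ^ (2 * ℓ) :=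
    hM ▸ choose_mul_pow_le d ℓ
  have hℓpos : (0 : ℝ) < ℓ := by exact_mod_cast hℓ
  have hchoose : (0 : ℝ) < (ℓ + d).choose ℓ := by exact_mod_cast Nat.choose_pos (by omega)
  rw [← mul_inv, ← mul_inv, inv_le_iff_one_le_mul₀ (by positivity)]
  calc 1 = l2norm (C *ᵥ (V *ᵥ u)) := by rw [Matrix.mulVec_mulVec, hCV, Matrix.one_mulVec, hu]
    _ ≤ M * (ℓ * (d + 2)) ^ ℓ * l2norm (V *ᵥ u) := l2norm_mulVec_le C (by positivity) hC _
    _ ≤ (ℓ + d).choose ℓ ^ 3 * 4 ^ ℓ * ℓ ^ (2 * ℓ) * l2norm (V *ᵥ u) := by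
        gcongr
        exact Real.sqrt_nonneg _
    _ = _ := mul_comm _ _

/-- Explicit lower bound on the minimum singular value `σ₀` of the
Vandermonde-type matrix of the `ℓ`-th principal lattice:
`σ₀ ≥ binom(ℓ+d, ℓ)⁻³ 4⁻ℓ ℓ^{-2ℓ}`. -/
theorem stmt8 (d ℓ : ℕ) (hd : 1 ≤ d) (hℓ : 1 ≤ ℓ)
    (M : ℕ) (hM : M = Nat.choose (ℓ + d) d)
    (U : Fin M → (Fin d → ℝ)) (hUinj : Function.Injective U)
    (hUrange : Set.range U = principalLattice d ℓ)
    (α : Fin M → (Fin d → ℕ)) (hαinj : Function.Injective α)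
    (hαrange : Set.range α = {s : Fin d → ℕ | ∑ i, s i ≤ ℓ})
    (V : Matrix (Fin M) (Fin M) ℝ)
    (hV : V = Matrix.of fun k j : Fin M => ∏ i, U k i ^ α j i)
    (σ₀ : ℝ)
    (hσ : IsLeast {r : ℝ | ∃ u : Fin M → ℝ, l2norm u = 1 ∧ r = l2norm (V.mulVec u)} σ₀) :
    ((Nat.choose (ℓ + d) ℓ : ℝ) ^ 3)⁻¹ * ((4 : ℝ) ^ ℓ)⁻¹ * ((ℓ : ℝ) ^ (2 * ℓ))⁻¹ ≤ σ₀ :=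
  stmt8_general d ℓ hℓ M hM U hUinj hUrange α hαinj hαrange V hV σ₀ hσ
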